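/- arXiv:1904.02009 — 3 statements merged into one kernel-verified Lean document; each statement's English description precedes it below -/
import Mathlib

section
/- Let X be a Tychonoff space, αX a Hausdorff compactification of X, and {K_i}_{i∈I} a family of pairwise disjoint nonempty compact subsets of the remainder αX ∖ X that is locally finite in αX. Then the quotient space γX of αX obtained by collapsing each K_i to a single point p_i (with distinct points p_i for distinct i, and all other points left fixed) is a Hausdorff compactification of X, and the quotient map h : αX → γX is continuous with h(x) = x for x ∉ ⋃ K_i and h(x) = p_i for x ∈ K_i. -/
/-- The relation identifying the points within each member of a family of sets. -/
def collapseRel {α : Type*} {I : Type*} (K : I → Set α) (x y : α) : Prop :=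
  x = y ∨ ∃ i, x ∈ K i ∧ y ∈ K i

/-- The setoid on `α` generated by collapsing each member of the family `K`
to a single point. -/
def collapseSetoid {α : Type*} {I : Type*} (K : I → Set α) : Setoid α :=
  Relation.EqvGen.setoid (collapseRel K)

/-!
The graph of the collapsing relation is the diagonal together with the locally finite union of
the closed squares `K i ×ˢ K i`, hence closed. Since `α` is compact, projecting along the second
factor shows that the saturation of a closed set is closed, i.e. the quotient map is closed. A
closed continuous image of a compact Hausdorff (so normal and T1) space is again normal and T1,
hence Hausdorff. Points of `X` avoid every `K i`, so their fibres are singletons, and a closed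
map is an embedding on any set of points with singleton fibres.
-/

open Set Filter Topology

section General

variable {X Y : Type*} [TopologicalSpace X] [TopologicalSpace Y] {f : X → Y}

theorem isClosedMap_quotientMk_of_isClosed_rel [CompactSpace X] (s : Setoid X)
    (hs : IsClosed {p : X × X | s p.1 p.2}) : IsClosedMap (Quotient.mk s) := by
  intro C hC
  have hsat : Quotient.mk s ⁻¹' (Quotient.mk s '' C) =
      Prod.fst '' ({p : X × X | s p.1 p.2} ∩ univ ×ˢ C) := by
    ext x
    simp only [mem_preimage, mem_image, Quotient.eq, mem_inter_iff, mem_ofPred_eq, mem_prod,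
      mem_univ, true_and, Prod.exists, exists_and_right, exists_eq_right]
    exact exists_congr fun y => by rw [and_comm, Setoid.comm']
  exact isClosed_coinduced.2
    (hsat ▸ isClosedMap_fst_of_compactSpace _ (hs.inter (isClosed_univ.prod hC)))

theorem IsClosedMap.normalSpace_of_surjective [NormalSpace X] (hf : IsClosedMap f)
    (hc : Continuous f) (hsurj : Function.Surjective f) : NormalSpace Y where
  normal s t hs ht hst := by
    obtain ⟨U, V, hU, hV, hsU, htV, hUV⟩ :=
      normal_separation (hs.preimage hc) (ht.preimage hc) (hst.preimage f)
    have hmem : ∀ {W u}, f ⁻¹' u ⊆ W → u ⊆ (f '' Wᶜ)ᶜ := fun hW y hy ⟨x, hxW, hxy⟩ =>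
      hxW (hW (by rwa [mem_preimage, hxy]))
    have hcore : ∀ {W}, f ⁻¹' (f '' Wᶜ)ᶜ ⊆ W := fun hx => not_not.1 fun hxW => hx ⟨_, hxW, rfl⟩
    exact ⟨_, _, (hf _ hU.isClosed_compl).isOpen_compl, (hf _ hV.isClosed_compl).isOpen_compl,
      hmem hsU, hmem htV, .of_preimage hsurj (hUV.mono hcore hcore)⟩

theorem IsClosedMap.t1Space_of_surjective [T1Space X] (hf : IsClosedMap f)
    (hsurj : Function.Surjective f) : T1Space Y where
  t1 y := by
    obtain ⟨x, rfl⟩ := hsurj y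
    simpa using hf _ (isClosed_singleton (x := x))

theorem IsClosedMap.isEmbedding_comp_subtypeVal (hf : IsClosedMap f) (hc : Continuous f)
    {s : Set X} (hs : ∀ x ∈ s, f ⁻¹' {f x} = {x}) : IsEmbedding (f ∘ Subtype.val : s → Y) := by
  refine ⟨isInducing_iff_nhds.2 fun x => ?_, fun x y hxy => Subtype.ext ?_⟩
  · rw [nhds_subtype, ← comap_comap, Function.comp_apply, hf.comap_nhds_eq hc, hs x x.2,
      nhdsSet_singleton]
  · have : (x : X) ∈ f ⁻¹' {f y} := hxy
    rwa [hs y y.2] at this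

end General

section Collapse

variable {α I : Type*} {K : I → Set α}

theorem collapseRel_equivalence (hdisj : Pairwise (Function.onFun Disjoint K)) :
    Equivalence (collapseRel K) where
  refl _ := .inl rfl
  symm := by
    rintro x y (rfl | ⟨i, hx, hy⟩)
    exacts [.inl rfl, .inr ⟨i, hy, hx⟩]
  trans := by
    rintro x y z (rfl | ⟨i, hx, hy⟩) (rfl | ⟨j, hy', hz⟩)
    · exact .inl rfl
    · exact .inr ⟨j, hy', hz⟩
    · exact .inr ⟨i, hx, hy⟩
    · obtain rfl : i = j := hdisj.eq (not_disjoint_iff.2 ⟨y, hy, hy'⟩)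
      exact .inr ⟨i, hx, hz⟩

theorem collapseSetoid_mk_eq_iff (hdisj : Pairwise (Function.onFun Disjoint K)) {x y : α} :
    Quotient.mk (collapseSetoid K) x = Quotient.mk (collapseSetoid K) y ↔ collapseRel K x y :=
  Quotient.eq.trans (collapseRel_equivalence hdisj).eqvGen_iff

theorem setOf_collapseRel_eq :
    {p : α × α | collapseRel K p.1 p.2} = diagonal α ∪ ⋃ i, K i ×ˢ K i := by
  ext ⟨x, y⟩
  simp [collapseRel]

theorem isClosed_setOf_collapseRel [TopologicalSpace α] [T2Space α] (hK : ∀ i, IsClosed (K i))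
    (hlf : LocallyFinite K) : IsClosed {p : α × α | collapseRel K p.1 p.2} := by
  rw [setOf_collapseRel_eq]
  exact isClosed_diagonal.union
    ((hlf.prod_right K).isClosed_iUnion fun i => (hK i).prod (hK i))

theorem isClosedMap_collapseSetoid_mk [TopologicalSpace α] [CompactSpace α] [T2Space α]
    (hK : ∀ i, IsClosed (K i)) (hdisj : Pairwise (Function.onFun Disjoint K))
    (hlf : LocallyFinite K) : IsClosedMap (Quotient.mk (collapseSetoid K)) := by
  refine isClosedMap_quotientMk_of_isClosed_rel _ ?_
  convert isClosed_setOf_collapseRel hK hlf using 3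
  exact (collapseRel_equivalence hdisj).eqvGen_iff

end Collapse

/-- Magill-type theorem: let `α` be a Hausdorff compactification of a Tychonoff
space `X` (viewed as a dense subset of `α`), and `{K i}` a locally finite family
of pairwise disjoint nonempty compact subsets of the remainder `α \ X`.  Then the
quotient `γ` of `α` collapsing each `K i` to a point is a Hausdorff
compactification of `X`: the quotient map `h` is continuous, `γ` is compact
Hausdorff, `X` maps onto a dense subset by a topological embedding fixing `X`
(i.e. injectively, with `h` injective off `⋃ i, K i`), and the points `p i = h`
of the classes `K i` are pairwise distinct. -/
theorem stmt2 {α : Type*} [TopologicalSpace α] [CompactSpace α] [T2Space α]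
    (X : Set α) (hX : Dense X) {I : Type*} (K : I → Set α)
    (hKX : ∀ i, K i ⊆ Xᶜ) (hcpt : ∀ i, IsCompact (K i))
    (hne : ∀ i, (K i).Nonempty) (hdisj : Pairwise (Function.onFun Disjoint K))
    (hlf : LocallyFinite K) :
    Continuous (Quotient.mk (collapseSetoid K)) ∧
    CompactSpace (Quotient (collapseSetoid K)) ∧
    T2Space (Quotient (collapseSetoid K)) ∧
    IsDenseEmbedding (fun x : X => Quotient.mk (collapseSetoid K) (x : α)) ∧
    (∀ x y : α, x ∉ ⋃ i, K i → y ∉ ⋃ i, K i →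
      Quotient.mk (collapseSetoid K) x = Quotient.mk (collapseSetoid K) y → x = y) ∧
    (∀ i : I, ∃ p : Quotient (collapseSetoid K),
      ∀ x ∈ K i, Quotient.mk (collapseSetoid K) x = p) ∧
    (∀ i j : I, i ≠ j → ∀ x ∈ K i, ∀ y ∈ K j,
      Quotient.mk (collapseSetoid K) x ≠ Quotient.mk (collapseSetoid K) y) := by
  set q := Quotient.mk (collapseSetoid K)
  have hq_eq {x y : α} : q x = q y ↔ collapseRel K x y := collapseSetoid_mk_eq_iff hdisj
  have hcont : Continuous q := continuous_quot_mk
  have hsurj : Function.Surjective q := Quotient.mk_surjective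
  have hclosed : IsClosedMap q :=
    isClosedMap_collapseSetoid_mk (fun i => (hcpt i).isClosed) hdisj hlf
  have := hclosed.normalSpace_of_surjective hcont hsurj
  have := hclosed.t1Space_of_surjective hsurj
  have hfiber : ∀ x ∈ X, q ⁻¹' {q x} = {x} := fun x hx => by
    ext y
    simp only [mem_preimage, mem_singleton_iff, hq_eq, collapseRel, or_iff_left_iff_imp]
    rintro ⟨i, -, hxi⟩
    exact absurd hx (hKX i hxi)
  have hemb := hclosed.isEmbedding_comp_subtypeVal hcont hfiber
  refine ⟨hcont, inferInstance, inferInstance,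
    ⟨⟨hemb.isInducing, hsurj.denseRange.comp hX.denseRange_val hcont⟩, hemb.injective⟩,
    ?_, fun i => ⟨q (hne i).some, fun x hx => hq_eq.2 (.inr ⟨i, hx, (hne i).some_mem⟩)⟩, ?_⟩
  · intro x y hx _ hxy
    rcases hq_eq.1 hxy with rfl | ⟨i, hxi, -⟩
    exacts [rfl, absurd (mem_iUnion.2 ⟨i, hxi⟩) hx]
  · intro i j hij x hx y hy hxy
    rcases hq_eq.1 hxy with rfl | ⟨k, hxk, hyk⟩
    · exact hij (hdisj.eq (not_disjoint_iff.2 ⟨x, hx, hy⟩))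
    · exact hij ((hdisj.eq (not_disjoint_iff.2 ⟨x, hxk, hx⟩)).symm.trans
        (hdisj.eq (not_disjoint_iff.2 ⟨y, hyk, hy⟩)))
end

section
/- Let X be a Tychonoff space and let π₁ and π₂ be two partitions of βX by compact sets, each containing {x} as a block for every x ∈ X, whose quotients βX/π₁ and βX/π₂ are Hausdorff compactifications of X. Then the partition π = { A ∩ B : A ∈ π₁, B ∈ π₂, A ∩ B ≠ ∅ } is a partition of βX by compact sets containing all singletons {x}, x ∈ X, and the quotient βX/π is (when Hausdorff) the join (least upper bound) of βX/π₁ and βX/π₂ in the ordered set of Hausdorff compactifications of X. -/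
/-!
The classes of `r ⊓ s` are exactly the nonempty intersections of an `r`-class with an
`s`-class, so the common refinement is the partition of the meet of the two setoids.
A compactification `γ` of `X` is the quotient of `βX` by its Čech map `f : βX → γ`.
A map `γ → βX/πᵢ` fixing `X` composes with `f` to the quotient map of `πᵢ`, since both agree on
the dense set `X` and `βX/πᵢ` is Hausdorff; hence every fibre of `f` lies in a block of `π₁`
and in a block of `π₂`, and the quotient map of the meet descends along `f`.
-/

/-- The common refinement of two partitions: all nonempty intersections of a
block of the first with a block of the second. -/
def commonRefinement {β : Type*} (π₁ π₂ : Set (Set β)) : Set (Set β) :=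
  {C | ∃ A ∈ π₁, ∃ B ∈ π₂, (A ∩ B).Nonempty ∧ C = A ∩ B}

section CommonRefinement

variable {β : Type*}

theorem Setoid.classes_inf (r s : Setoid β) :
    (r ⊓ s).classes = commonRefinement r.classes s.classes := by
  ext C
  constructor
  · rintro ⟨y, rfl⟩
    refine ⟨_, r.mem_classes y, _, s.mem_classes y, ⟨y, r.refl y, s.refl y⟩, ?_⟩
    ext x
    exact Setoid.inf_iff_and
  · rintro ⟨_, ⟨y, rfl⟩, _, ⟨z, rfl⟩, ⟨w, hwy, hwz⟩, rfl⟩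
    refine ⟨w, Set.ext fun x => ?_⟩
    simp only [Set.mem_inter_iff, Set.mem_ofPred_eq]
    exact and_congr ⟨fun h => r.trans h (r.symm hwy), fun h => r.trans h hwy⟩
      ⟨fun h => s.trans h (s.symm hwz), fun h => s.trans h hwz⟩

theorem Setoid.classes_mkClasses_inf {π₁ π₂ : Set (Set β)} (h₁ : Setoid.IsPartition π₁)
    (h₂ : Setoid.IsPartition π₂) :
    (Setoid.mkClasses π₁ h₁.2 ⊓ Setoid.mkClasses π₂ h₂.2).classes = commonRefinement π₁ π₂ := by
  rw [Setoid.classes_inf, Setoid.classes_mkClasses π₁ h₁, Setoid.classes_mkClasses π₂ h₂]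

theorem isCompact_of_mem_commonRefinement [TopologicalSpace β] [T2Space β]
    {π₁ π₂ : Set (Set β)} (hcpt₁ : ∀ A ∈ π₁, IsCompact A) (hcpt₂ : ∀ B ∈ π₂, IsCompact B) :
    ∀ C ∈ commonRefinement π₁ π₂, IsCompact C := by
  rintro _ ⟨A, hA, B, hB, -, rfl⟩
  exact (hcpt₁ A hA).inter_right (hcpt₂ B hB).isClosed

theorem singleton_mem_commonRefinement {π₁ π₂ : Set (Set β)} {b : β} (h₁ : {b} ∈ π₁)
    (h₂ : {b} ∈ π₂) : {b} ∈ commonRefinement π₁ π₂ :=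
  ⟨{b}, h₁, {b}, h₂, ⟨b, rfl, rfl⟩, (Set.inter_self _).symm⟩

end CommonRefinement

section QuotientLift

variable {α γ : Type*} [TopologicalSpace α] [TopologicalSpace γ]

theorem Topology.IsQuotientMap.exists_continuous_lift_of_ker_le {f : α → γ}
    (hf : IsQuotientMap f) {r : Setoid α} (hr : Setoid.ker f ≤ r) :
    ∃ g : γ → Quotient r, Continuous g ∧ ∀ a, g (f a) = Quotient.mk r a :=
  let F : C(α, γ) := ⟨f, hf.continuous⟩
  let g₀ : C(α, Quotient r) := ⟨Quotient.mk r, continuous_quot_mk⟩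
  have hg₀ : Function.FactorsThrough g₀ F := fun _ _ hab => Quotient.sound (hr hab)
  ⟨IsQuotientMap.lift (f := F) hf g₀ hg₀, ContinuousMap.continuous _,
    DFunLike.congr_fun (IsQuotientMap.lift_comp (f := F) hf g₀ hg₀)⟩

theorem exists_continuous_quotient_factor {r s : Setoid α} (h : r ≤ s) :
    ∃ g : Quotient r → Quotient s, Continuous g ∧
      ∀ a, g (Quotient.mk r a) = Quotient.mk s a := by
  refine (isQuotientMap_quotient_mk' (s := r)).exists_continuous_lift_of_ker_le ?_
  rwa [← Setoid.ker_mk_eq r] at h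

end QuotientLift

section StoneCech

variable {X γ : Type*} [TopologicalSpace X] [TopologicalSpace γ] [CompactSpace γ] [T2Space γ]
  {e : X → γ}

theorem surjective_stoneCechExtend (he : Continuous e) (hd : DenseRange e) :
    Function.Surjective (stoneCechExtend he) := by
  have hsub : Set.range e ⊆ Set.range (stoneCechExtend he) := by
    rintro _ ⟨x, rfl⟩
    exact ⟨stoneCechUnit x, stoneCechExtend_stoneCechUnit he x⟩
  refine Set.range_eq_univ.mp (Set.eq_univ_of_univ_subset ?_)
  rw [← hd.closure_range]
  exact (isCompact_range (continuous_stoneCechExtend he)).isClosed.closure_subset_iff.mpr hsub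

theorem isQuotientMap_stoneCechExtend (he : Continuous e) (hd : DenseRange e) :
    Topology.IsQuotientMap (stoneCechExtend he) :=
  .of_surjective_continuous (surjective_stoneCechExtend he hd) (continuous_stoneCechExtend he)

theorem ker_stoneCechExtend_le {r : Setoid (StoneCech X)} [T2Space (Quotient r)]
    (he : Continuous e) {g : γ → Quotient r} (hg : Continuous g)
    (hge : ∀ x, g (e x) = Quotient.mk r (stoneCechUnit x)) :
    Setoid.ker (stoneCechExtend he) ≤ r := by
  have hcomp : g ∘ stoneCechExtend he = Quotient.mk r :=
    stoneCech_hom_ext (hg.comp (continuous_stoneCechExtend he)) continuous_quot_mk <|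
      funext fun x => by simp only [Function.comp_apply, stoneCechExtend_stoneCechUnit, hge]
  intro p q hpq
  apply Quotient.exact
  rw [← congrFun hcomp p, ← congrFun hcomp q, Function.comp_apply, Function.comp_apply,
    Setoid.ker_def.mp hpq]

end StoneCech

theorem stmt11_general {X : Type u} [TopologicalSpace X]
    (π₁ π₂ : Set (Set (StoneCech X)))
    (h₁ : Setoid.IsPartition π₁) (h₂ : Setoid.IsPartition π₂)
    (hcpt₁ : ∀ A ∈ π₁, IsCompact A) (hcpt₂ : ∀ B ∈ π₂, IsCompact B)
    (hsing₁ : ∀ x : X, {stoneCechUnit x} ∈ π₁)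
    (hsing₂ : ∀ x : X, {stoneCechUnit x} ∈ π₂)
    (hT2₁ : T2Space (Quotient (Setoid.mkClasses π₁ h₁.2)))
    (hT2₂ : T2Space (Quotient (Setoid.mkClasses π₂ h₂.2))) :
    Setoid.IsPartition (commonRefinement π₁ π₂) ∧
    (∀ C ∈ commonRefinement π₁ π₂, IsCompact C) ∧
    (∀ x : X, {stoneCechUnit x} ∈ commonRefinement π₁ π₂) ∧
    (Setoid.mkClasses π₁ h₁.2 ⊓ Setoid.mkClasses π₂ h₂.2).classes
      = commonRefinement π₁ π₂ ∧
    (∃ g₁ : Quotient (Setoid.mkClasses π₁ h₁.2 ⊓ Setoid.mkClasses π₂ h₂.2) →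
        Quotient (Setoid.mkClasses π₁ h₁.2), Continuous g₁ ∧ ∀ x : X,
        g₁ (Quotient.mk _ (stoneCechUnit x)) = Quotient.mk _ (stoneCechUnit x)) ∧
    (∃ g₂ : Quotient (Setoid.mkClasses π₁ h₁.2 ⊓ Setoid.mkClasses π₂ h₂.2) →
        Quotient (Setoid.mkClasses π₂ h₂.2), Continuous g₂ ∧ ∀ x : X,
        g₂ (Quotient.mk _ (stoneCechUnit x)) = Quotient.mk _ (stoneCechUnit x)) ∧
    (∀ (γ : Type u) [TopologicalSpace γ] [CompactSpace γ] [T2Space γ]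
        (eγ : X → γ), IsDenseEmbedding eγ →
      (∃ g₁ : γ → Quotient (Setoid.mkClasses π₁ h₁.2), Continuous g₁ ∧
        ∀ x : X, g₁ (eγ x) = Quotient.mk _ (stoneCechUnit x)) →
      (∃ g₂ : γ → Quotient (Setoid.mkClasses π₂ h₂.2), Continuous g₂ ∧
        ∀ x : X, g₂ (eγ x) = Quotient.mk _ (stoneCechUnit x)) →
      ∃ g : γ → Quotient (Setoid.mkClasses π₁ h₁.2 ⊓ Setoid.mkClasses π₂ h₂.2),
        Continuous g ∧ ∀ x : X, g (eγ x) = Quotient.mk _ (stoneCechUnit x)) := by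
  have hclasses := Setoid.classes_mkClasses_inf h₁ h₂
  refine ⟨hclasses ▸ Setoid.isPartition_classes _, isCompact_of_mem_commonRefinement hcpt₁ hcpt₂,
    fun x => singleton_mem_commonRefinement (hsing₁ x) (hsing₂ x), hclasses, ?_, ?_, ?_⟩
  · obtain ⟨g, hg, hgmk⟩ := exists_continuous_quotient_factor (α := StoneCech X) inf_le_left
    exact ⟨g, hg, fun x => hgmk _⟩
  · obtain ⟨g, hg, hgmk⟩ := exists_continuous_quotient_factor (α := StoneCech X) inf_le_right
    exact ⟨g, hg, fun x => hgmk _⟩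
  · rintro γ _ _ _ e he ⟨g₁, hg₁, hge₁⟩ ⟨g₂, hg₂, hge₂⟩
    have hker := le_inf (ker_stoneCechExtend_le he.continuous hg₁ hge₁)
      (ker_stoneCechExtend_le he.continuous hg₂ hge₂)
    obtain ⟨g, hg, hgf⟩ :=
      (isQuotientMap_stoneCechExtend he.continuous he.dense).exists_continuous_lift_of_ker_le
        hker
    exact ⟨g, hg, fun x => by rw [← stoneCechExtend_stoneCechUnit he.continuous x, hgf]⟩

/-- Let `π₁`, `π₂` be partitions of `βX` by compact sets, with singleton blocks
at points of `X`, whose quotients are Hausdorff.  Then the common refinement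
`π = {A ∩ B ≠ ∅}` is again such a partition (by compact sets, with singleton
blocks at points of `X`), it is the partition into classes of the meet of the
two corresponding setoids, and (when its quotient is Hausdorff) that quotient
is the least upper bound of `βX/π₁` and `βX/π₂` among Hausdorff
compactifications of `X`: it maps continuously onto each of them fixing `X`,
and any Hausdorff compactification of `X` mapping onto both fixing `X` also
maps onto it fixing `X`. -/
theorem stmt11 {X : Type u} [TopologicalSpace X] [T35Space X]
    (π₁ π₂ : Set (Set (StoneCech X)))
    (h₁ : Setoid.IsPartition π₁) (h₂ : Setoid.IsPartition π₂)
    (hcpt₁ : ∀ A ∈ π₁, IsCompact A) (hcpt₂ : ∀ B ∈ π₂, IsCompact B)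
    (hsing₁ : ∀ x : X, {stoneCechUnit x} ∈ π₁)
    (hsing₂ : ∀ x : X, {stoneCechUnit x} ∈ π₂)
    (hT2₁ : T2Space (Quotient (Setoid.mkClasses π₁ h₁.2)))
    (hT2₂ : T2Space (Quotient (Setoid.mkClasses π₂ h₂.2)))
    (hT2 : T2Space (Quotient (Setoid.mkClasses π₁ h₁.2 ⊓ Setoid.mkClasses π₂ h₂.2))) :
    Setoid.IsPartition (commonRefinement π₁ π₂) ∧
    (∀ C ∈ commonRefinement π₁ π₂, IsCompact C) ∧
    (∀ x : X, {stoneCechUnit x} ∈ commonRefinement π₁ π₂) ∧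
    (Setoid.mkClasses π₁ h₁.2 ⊓ Setoid.mkClasses π₂ h₂.2).classes
      = commonRefinement π₁ π₂ ∧
    (∃ g₁ : Quotient (Setoid.mkClasses π₁ h₁.2 ⊓ Setoid.mkClasses π₂ h₂.2) →
        Quotient (Setoid.mkClasses π₁ h₁.2), Continuous g₁ ∧ ∀ x : X,
        g₁ (Quotient.mk _ (stoneCechUnit x)) = Quotient.mk _ (stoneCechUnit x)) ∧
    (∃ g₂ : Quotient (Setoid.mkClasses π₁ h₁.2 ⊓ Setoid.mkClasses π₂ h₂.2) →
        Quotient (Setoid.mkClasses π₂ h₂.2), Continuous g₂ ∧ ∀ x : X,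
        g₂ (Quotient.mk _ (stoneCechUnit x)) = Quotient.mk _ (stoneCechUnit x)) ∧
    (∀ (γ : Type u) [TopologicalSpace γ] [CompactSpace γ] [T2Space γ]
        (eγ : X → γ), IsDenseEmbedding eγ →
      (∃ g₁ : γ → Quotient (Setoid.mkClasses π₁ h₁.2), Continuous g₁ ∧
        ∀ x : X, g₁ (eγ x) = Quotient.mk _ (stoneCechUnit x)) →
      (∃ g₂ : γ → Quotient (Setoid.mkClasses π₂ h₂.2), Continuous g₂ ∧
        ∀ x : X, g₂ (eγ x) = Quotient.mk _ (stoneCechUnit x)) →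
      ∃ g : γ → Quotient (Setoid.mkClasses π₁ h₁.2 ⊓ Setoid.mkClasses π₂ h₂.2),
        Continuous g ∧ ∀ x : X, g (eγ x) = Quotient.mk _ (stoneCechUnit x)) :=
  stmt11_general π₁ π₂ h₁ h₂ hcpt₁ hcpt₂ hsing₁ hsing₂ hT2₁ hT2₂
end

section
/- Let Y be the set of locally compact points of a Tychonoff space X, and suppose Y is dense in X. Then the map sending each Hausdorff compactification of X to itself, viewed as a Hausdorff compactification of Y, is an injective order-embedding of the partially ordered set K(X) of Hausdorff compactifications of X into the partially ordered set K(Y), which moreover preserves binary joins. -/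
/-!
Density of `Y` in `X` makes a map agreeing with `e₂ ∘ e₁⁻¹` on `Y` agree with it on all of `X`,
so the order on compactifications is the same over `X` and over `Y`. The join of `α₁` and `α₂`
over `X` is represented by the closure `Z` of the image of `x ↦ (e₁ x, e₂ x)` in `α₁ × α₂`, so
`Z` lies above `γ`. A compactification `δ` of `Y` lying above `α₁` and `α₂` maps into `α₁ × α₂`
by the product of the two maps, with image inside `Z` since the image of `Y` is dense in `δ`;
composing with `Z → γ` puts `δ` above `γ`.
-/

open Set Topology

section

variable {X Z : Type*} [TopologicalSpace X] [TopologicalSpace Z]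

theorem Topology.IsEmbedding.isDenseEmbedding_codRestrict_closure_range {f : X → Z}
    (hf : IsEmbedding f) :
    IsDenseEmbedding
      (codRestrict f (closure (range f)) fun x => subset_closure (mem_range_self x)) :=
  { (hf.codRestrict _ _).isInducing with
    dense := by
      rw [DenseRange, Subtype.dense_iff, ← range_comp]
      exact subset_rfl
    injective := (hf.codRestrict _ _).injective }

theorem Topology.IsEmbedding.prod_of_continuous {W : Type*} [TopologicalSpace W] {f : X → Z}
    (hf : IsEmbedding f) {g : X → W} (hg : Continuous g) : IsEmbedding (Function.prod f g) :=
  .of_comp (hf.continuous.prodMk hg) continuous_fst hf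

theorem DenseRange.mem_closure_of_forall_mem {W δ : Type*} [TopologicalSpace δ] {e : W → δ}
    (he : DenseRange e) {h : δ → Z} (hh : Continuous h) {s : Set Z}
    (hs : ∀ w, h (e w) ∈ s) (d : δ) : h d ∈ closure s :=
  closure_mono (image_subset_iff.2 (range_subset_iff.2 hs) : h '' range e ⊆ s)
    (hh.range_subset_closure_image_dense he (mem_range_self d))

end

theorem stmt13_general {X : Type u} [TopologicalSpace X]
    (Y : Set X) (hYdense : Dense Y) :
    (∀ (α₁ α₂ : Type u) [TopologicalSpace α₁] [CompactSpace α₁] [T2Space α₁]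
        [TopologicalSpace α₂] [CompactSpace α₂] [T2Space α₂]
        (e₁ : X → α₁) (e₂ : X → α₂),
        IsDenseEmbedding e₁ → IsDenseEmbedding e₂ →
      ((∃ f : α₁ → α₂, Continuous f ∧ ∀ x : X, f (e₁ x) = e₂ x) ↔
        (∃ f : α₁ → α₂, Continuous f ∧ ∀ y ∈ Y, f (e₁ y) = e₂ y))) ∧
    (∀ (α₁ α₂ γ : Type u) [TopologicalSpace α₁] [CompactSpace α₁] [T2Space α₁]
        [TopologicalSpace α₂] [CompactSpace α₂] [T2Space α₂]
        [TopologicalSpace γ] [CompactSpace γ] [T2Space γ]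
        (e₁ : X → α₁) (e₂ : X → α₂) (eγ : X → γ),
        IsDenseEmbedding e₁ → IsDenseEmbedding e₂ → IsDenseEmbedding eγ →
      -- `γ` is an upper bound of `α₁, α₂` over `X`
      (∃ f : γ → α₁, Continuous f ∧ ∀ x : X, f (eγ x) = e₁ x) →
      (∃ f : γ → α₂, Continuous f ∧ ∀ x : X, f (eγ x) = e₂ x) →
      -- `γ` is a least such: any compactification of `X` above both over `X`
      -- lies above `γ` over `X`
      (∀ (δ : Type u) [TopologicalSpace δ] [CompactSpace δ] [T2Space δ]
          (eδ : X → δ), IsDenseEmbedding eδ →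
        (∃ f : δ → α₁, Continuous f ∧ ∀ x : X, f (eδ x) = e₁ x) →
        (∃ f : δ → α₂, Continuous f ∧ ∀ x : X, f (eδ x) = e₂ x) →
        (∃ f : δ → γ, Continuous f ∧ ∀ x : X, f (eδ x) = eγ x)) →
      -- then `γ` is also a least upper bound of `α₁, α₂` over `Y`
      ((∃ f : γ → α₁, Continuous f ∧ ∀ y ∈ Y, f (eγ y) = e₁ y) ∧
       (∃ f : γ → α₂, Continuous f ∧ ∀ y ∈ Y, f (eγ y) = e₂ y) ∧
       (∀ (δ : Type u) [TopologicalSpace δ] [CompactSpace δ] [T2Space δ]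
          (eδ : Y → δ), IsDenseEmbedding eδ →
        (∃ f : δ → α₁, Continuous f ∧ ∀ y : Y, f (eδ y) = e₁ y) →
        (∃ f : δ → α₂, Continuous f ∧ ∀ y : Y, f (eδ y) = e₂ y) →
        (∃ f : δ → γ, Continuous f ∧ ∀ y : Y, f (eδ y) = eγ y)))) := by
  refine ⟨fun α₁ α₂ _ _ _ _ _ _ e₁ e₂ he₁ he₂ =>
    ⟨fun ⟨f, hf, hfe⟩ => ⟨f, hf, fun y _ => hfe y⟩, fun ⟨f, hf, hfe⟩ =>
      ⟨f, hf, congrFun <|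
        Continuous.ext_on hYdense (hf.comp he₁.continuous) he₂.continuous hfe⟩⟩, ?_⟩
  intro α₁ α₂ γ _ _ _ _ _ _ _ _ _ e₁ e₂ eγ he₁ he₂ _ ⟨f₁, hf₁, hfe₁⟩ ⟨f₂, hf₂, hfe₂⟩ hleast
  refine ⟨⟨f₁, hf₁, fun y _ => hfe₁ y⟩, ⟨f₂, hf₂, fun y _ => hfe₂ y⟩, ?_⟩
  rintro δ _ _ _ eδ heδ ⟨g₁, hg₁, hge₁⟩ ⟨g₂, hg₂, hge₂⟩
  set Z := closure (range (Function.prod e₁ e₂))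
  have : CompactSpace Z := isCompact_iff_compactSpace.mp isClosed_closure.isCompact
  obtain ⟨k, hk, hke⟩ := hleast Z _
    (he₁.isEmbedding.prod_of_continuous he₂.continuous).isDenseEmbedding_codRestrict_closure_range
    ⟨fun z => z.1.1, by fun_prop, fun _ => rfl⟩ ⟨fun z => z.1.2, by fun_prop, fun _ => rfl⟩
  have hmem : ∀ d, Function.prod g₁ g₂ d ∈ Z :=
    heδ.dense.mem_closure_of_forall_mem (hg₁.prodMk hg₂) fun y =>
      ⟨y, by simp [hge₁, hge₂]⟩
  refine ⟨fun d => k ⟨_, hmem d⟩, hk.comp ((hg₁.prodMk hg₂).subtype_mk _), fun y => ?_⟩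
  exact (congrArg k (Subtype.ext (by simp [hge₁, hge₂]))).trans (hke y)

/-- Let `Y` be the set of locally compact points of a Tychonoff space `X`
(points with a compact neighbourhood) and suppose `Y` is dense in `X`.
Viewing each Hausdorff compactification of `X` (given by a dense embedding
`e : X → α`) as a compactification of `Y` (via `e` restricted to `Y`), the
resulting map `K(X) → K(Y)` is an order-embedding: the compactification order
over `X` holds iff it holds over `Y` (this gives injectivity on equivalence
classes), and it preserves binary joins: a least upper bound of two
compactifications of `X` in the `X`-order is a least upper bound in the
`Y`-order. -/
theorem stmt13 {X : Type u} [TopologicalSpace X] [T35Space X]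
    (Y : Set X) (hYdef : Y = {x : X | ∃ K : Set X, IsCompact K ∧ K ∈ nhds x})
    (hYdense : Dense Y) :
    (∀ (α₁ α₂ : Type u) [TopologicalSpace α₁] [CompactSpace α₁] [T2Space α₁]
        [TopologicalSpace α₂] [CompactSpace α₂] [T2Space α₂]
        (e₁ : X → α₁) (e₂ : X → α₂),
        IsDenseEmbedding e₁ → IsDenseEmbedding e₂ →
      ((∃ f : α₁ → α₂, Continuous f ∧ ∀ x : X, f (e₁ x) = e₂ x) ↔
        (∃ f : α₁ → α₂, Continuous f ∧ ∀ y ∈ Y, f (e₁ y) = e₂ y))) ∧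
    (∀ (α₁ α₂ γ : Type u) [TopologicalSpace α₁] [CompactSpace α₁] [T2Space α₁]
        [TopologicalSpace α₂] [CompactSpace α₂] [T2Space α₂]
        [TopologicalSpace γ] [CompactSpace γ] [T2Space γ]
        (e₁ : X → α₁) (e₂ : X → α₂) (eγ : X → γ),
        IsDenseEmbedding e₁ → IsDenseEmbedding e₂ → IsDenseEmbedding eγ →
      -- `γ` is an upper bound of `α₁, α₂` over `X`
      (∃ f : γ → α₁, Continuous f ∧ ∀ x : X, f (eγ x) = e₁ x) →
      (∃ f : γ → α₂, Continuous f ∧ ∀ x : X, f (eγ x) = e₂ x) →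
      -- `γ` is a least such: any compactification of `X` above both over `X`
      -- lies above `γ` over `X`
      (∀ (δ : Type u) [TopologicalSpace δ] [CompactSpace δ] [T2Space δ]
          (eδ : X → δ), IsDenseEmbedding eδ →
        (∃ f : δ → α₁, Continuous f ∧ ∀ x : X, f (eδ x) = e₁ x) →
        (∃ f : δ → α₂, Continuous f ∧ ∀ x : X, f (eδ x) = e₂ x) →
        (∃ f : δ → γ, Continuous f ∧ ∀ x : X, f (eδ x) = eγ x)) →
      -- then `γ` is also a least upper bound of `α₁, α₂` over `Y`
      ((∃ f : γ → α₁, Continuous f ∧ ∀ y ∈ Y, f (eγ y) = e₁ y) ∧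
       (∃ f : γ → α₂, Continuous f ∧ ∀ y ∈ Y, f (eγ y) = e₂ y) ∧
       (∀ (δ : Type u) [TopologicalSpace δ] [CompactSpace δ] [T2Space δ]
          (eδ : Y → δ), IsDenseEmbedding eδ →
        (∃ f : δ → α₁, Continuous f ∧ ∀ y : Y, f (eδ y) = e₁ y) →
        (∃ f : δ → α₂, Continuous f ∧ ∀ y : Y, f (eδ y) = e₂ y) →
        (∃ f : δ → γ, Continuous f ∧ ∀ y : Y, f (eδ y) = eγ y)))) :=
  stmt13_general Y hYdense
end
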